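/- Let π : (X,G) → (Y,G) be a factor map and U a finite open cover of X. Then D_e(G,U|π) ≤ D(G,U|π), i.e., the supremum of lower dimensions D(S) over all relative entropy generating sets S of U is at most the relative lower entropy dimension of U. -/

import Mathlib

open Filter Topology Pointwise
open scoped ENNReal

/-- A Følner sequence for a group `G`. -/
def IsFolnerSeq (G : Type*) [Group G] (F : ℕ → Finset G) : Prop :=
  (∀ n, (F n).Nonempty) ∧
    ∀ (K : Finset G) (δ : ℝ), 0 < δ →
      ∀ᶠ n in atTop,
        ((symmDiff ((K : Set G) * ((F n : Set G))) ((F n : Set G))).ncard : ℝ) <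
          δ * ((F n).card : ℝ)

/-- Amenability of a (countable discrete) group via almost invariant finite sets. -/
def IsAmenableGrp (G : Type*) [Group G] : Prop :=
  ∀ K : Finset G, K.Nonempty → ∀ δ : ℝ, 0 < δ →
    ∃ F : Finset G, F.Nonempty ∧
      ((symmDiff ((K : Set G) * (F : Set G)) (F : Set G)).ncard : ℝ) < δ * (F.card : ℝ)

/-- The finite set `A ∩ S`. -/
noncomputable def interF {G : Type*} (A : Finset G) (S : Set G) : Finset G :=
  @Finset.filter G (fun g => g ∈ S) (Classical.decPred _) A

/-- `S` belongs to `𝓘(G)` : `|S ∩ F n| → ∞`. -/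
def InI {G : Type*} (F : ℕ → Finset G) (S : Set G) : Prop :=
  Tendsto (fun n => (interF (F n) S).card) atTop atTop

/-- `D̄(S, α) = limsup_n |S ∩ F n| / |F n|^α`. -/
noncomputable def DbarAt {G : Type*} (F : ℕ → Finset G) (S : Set G) (α : ℝ) : ℝ≥0∞ :=
  atTop.limsup fun n =>
    ((interF (F n) S).card : ℝ≥0∞) / ENNReal.ofReal (((F n).card : ℝ) ^ α)

/-- `D̲(S, α) = liminf_n |S ∩ F n| / |F n|^α`. -/
noncomputable def DlowAt {G : Type*} (F : ℕ → Finset G) (S : Set G) (α : ℝ) : ℝ≥0∞ :=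
  atTop.liminf fun n =>
    ((interF (F n) S).card : ℝ≥0∞) / ENNReal.ofReal (((F n).card : ℝ) ^ α)

/-- The upper dimension `D̄(S)` of a subset `S ⊆ G`. -/
noncomputable def upperDim {G : Type*} (F : ℕ → Finset G) (S : Set G) : ℝ :=
  sInf {α : ℝ | 0 ≤ α ∧ DbarAt F S α = 0}

/-- The lower dimension `D̲(S)` of a subset `S ⊆ G`. -/
noncomputable def lowerDim {G : Type*} (F : ℕ → Finset G) (S : Set G) : ℝ :=
  sInf {α : ℝ | 0 ≤ α ∧ DlowAt F S α = 0}

/-- A finite open cover of `X`. -/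
def IsOpenCover {X : Type*} [TopologicalSpace X] (𝒰 : Set (Set X)) : Prop :=
  𝒰.Finite ∧ (∀ U ∈ 𝒰, IsOpen U) ∧ ⋃₀ 𝒰 = Set.univ

/-- Minimal number of members of `𝒰` needed to cover `E`. -/
noncomputable def coverNum {X : Type*} (𝒰 : Set (Set X)) (E : Set X) : ℕ :=
  sInf {k | ∃ t : Finset (Set X), ↑t ⊆ 𝒰 ∧ t.card = k ∧ E ⊆ ⋃₀ (t : Set (Set X))}

/-- `N(𝒰 | π) = sup_y` of the covering number of the fiber `π ⁻¹ y`. -/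
noncomputable def NRel {X Y : Type*} (𝒰 : Set (Set X)) (π : X → Y) : ℕ :=
  ⨆ y : Y, coverNum 𝒰 (π ⁻¹' {y})

/-- A factor map between `G`-systems. -/
def IsFactorMap (G : Type*) {X Y : Type*} [Group G] [TopologicalSpace X] [TopologicalSpace Y]
    [MulAction G X] [MulAction G Y] (π : X → Y) : Prop :=
  Continuous π ∧ Function.Surjective π ∧ ∀ (g : G) (x : X), π (g • x) = g • π x

/-- The join `⋁_{g ∈ B} g⁻¹ 𝒰`. -/
def dynJoin {G X : Type*} [Group G] [MulAction G X] (B : Finset G) (𝒰 : Set (Set X)) :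
    Set (Set X) :=
  {W | ∃ f : G → Set X, (∀ g ∈ B, f g ∈ 𝒰) ∧ W = ⋂ g ∈ B, (fun x => g • x) ⁻¹' f g}

/-- `h̄(G, 𝒰, α | π)`. -/
noncomputable def hRelU {G X Y : Type*} [Group G] [MulAction G X]
    (F : ℕ → Finset G) (𝒰 : Set (Set X)) (π : X → Y) (α : ℝ) : ℝ≥0∞ :=
  atTop.limsup fun n =>
    ENNReal.ofReal (Real.log (NRel (dynJoin (F n) 𝒰) π)) /
      ENNReal.ofReal (((F n).card : ℝ) ^ α)

/-- `h̲(G, 𝒰, α | π)`. -/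
noncomputable def hRelL {G X Y : Type*} [Group G] [MulAction G X]
    (F : ℕ → Finset G) (𝒰 : Set (Set X)) (π : X → Y) (α : ℝ) : ℝ≥0∞ :=
  atTop.liminf fun n =>
    ENNReal.ofReal (Real.log (NRel (dynJoin (F n) 𝒰) π)) /
      ENNReal.ofReal (((F n).card : ℝ) ^ α)

/-- The relative upper entropy dimension `D̄(G, 𝒰 | π)` of a cover. -/
noncomputable def DU {G X Y : Type*} [Group G] [MulAction G X]
    (F : ℕ → Finset G) (𝒰 : Set (Set X)) (π : X → Y) : ℝ :=
  sInf {α : ℝ | 0 ≤ α ∧ hRelU F 𝒰 π α = 0}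

/-- The relative lower entropy dimension `D̲(G, 𝒰 | π)` of a cover. -/
noncomputable def DL {G X Y : Type*} [Group G] [MulAction G X]
    (F : ℕ → Finset G) (𝒰 : Set (Set X)) (π : X → Y) : ℝ :=
  sInf {α : ℝ | 0 ≤ α ∧ hRelL F 𝒰 π α = 0}

/-- The relative upper entropy dimension `D̄(X, G | π)` of the system. -/
noncomputable def DUSys {G X Y : Type*} [Group G] [TopologicalSpace X] [MulAction G X]
    (F : ℕ → Finset G) (π : X → Y) : ℝ :=
  sSup {d : ℝ | ∃ 𝒰 : Set (Set X), IsOpenCover 𝒰 ∧ d = DU F 𝒰 π}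

/-- The relative lower entropy dimension `D̲(X, G | π)` of the system. -/
noncomputable def DLSys {G X Y : Type*} [Group G] [TopologicalSpace X] [MulAction G X]
    (F : ℕ → Finset G) (π : X → Y) : ℝ :=
  sSup {d : ℝ | ∃ 𝒰 : Set (Set X), IsOpenCover 𝒰 ∧ d = DL F 𝒰 π}

/-- `(1 / |F n ∩ S|) log N(⋁_{g ∈ F n ∩ S} g⁻¹ 𝒰 | π)`. -/
noncomputable def entAlong {G X Y : Type*} [Group G] [MulAction G X]
    (F : ℕ → Finset G) (S : Set G) (𝒰 : Set (Set X)) (π : X → Y) : ℕ → ℝ≥0∞ :=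
  fun n =>
    ENNReal.ofReal (Real.log (NRel (dynJoin (interF (F n) S) 𝒰) π)) /
      ((interF (F n) S).card : ℝ≥0∞)

/-- `S` is a relative entropy generating set of `𝒰` relative to `π`. -/
def IsEntGen {G X Y : Type*} [Group G] [MulAction G X]
    (F : ℕ → Finset G) (S : Set G) (𝒰 : Set (Set X)) (π : X → Y) : Prop :=
  InI F S ∧ 0 < atTop.liminf (entAlong F S 𝒰 π)

/-- `S ∈ 𝒫(G, 𝒰 | π)` : positive relative upper entropy along `S`. -/
def InP {G X Y : Type*} [Group G] [MulAction G X]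
    (F : ℕ → Finset G) (S : Set G) (𝒰 : Set (Set X)) (π : X → Y) : Prop :=
  InI F S ∧ 0 < atTop.limsup (entAlong F S 𝒰 π)

/-- `D̄_e(G, 𝒰 | π)`. -/
noncomputable def DeU {G X Y : Type*} [Group G] [MulAction G X]
    (F : ℕ → Finset G) (𝒰 : Set (Set X)) (π : X → Y) : ℝ :=
  sSup {d : ℝ | ∃ S : Set G, IsEntGen F S 𝒰 π ∧ d = upperDim F S}

/-- `D̲_e(G, 𝒰 | π)`. -/
noncomputable def DeL {G X Y : Type*} [Group G] [MulAction G X]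
    (F : ℕ → Finset G) (𝒰 : Set (Set X)) (π : X → Y) : ℝ :=
  sSup {d : ℝ | ∃ S : Set G, IsEntGen F S 𝒰 π ∧ d = lowerDim F S}

/-- `D̄_p(G, 𝒰 | π)`. -/
noncomputable def DpU {G X Y : Type*} [Group G] [MulAction G X]
    (F : ℕ → Finset G) (𝒰 : Set (Set X)) (π : X → Y) : ℝ :=
  sSup {d : ℝ | ∃ S : Set G, InP F S 𝒰 π ∧ d = upperDim F S}

/-- `D̲_p(G, 𝒰 | π)`. -/
noncomputable def DpL {G X Y : Type*} [Group G] [MulAction G X]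
    (F : ℕ → Finset G) (𝒰 : Set (Set X)) (π : X → Y) : ℝ :=
  sSup {d : ℝ | ∃ S : Set G, InP F S 𝒰 π ∧ d = lowerDim F S}

/-- `D̄_e(X, G | π)`. -/
noncomputable def DeUSys {G X Y : Type*} [Group G] [TopologicalSpace X] [MulAction G X]
    (F : ℕ → Finset G) (π : X → Y) : ℝ :=
  sSup {d : ℝ | ∃ 𝒰 : Set (Set X), IsOpenCover 𝒰 ∧ d = DeU F 𝒰 π}

/-- `D̲_p(X, G | π)`. -/
noncomputable def DpLSys {G X Y : Type*} [Group G] [TopologicalSpace X] [MulAction G X]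
    (F : ℕ → Finset G) (π : X → Y) : ℝ :=
  sSup {d : ℝ | ∃ 𝒰 : Set (Set X), IsOpenCover 𝒰 ∧ d = DpL F 𝒰 π}

/-- The cover `{X ∖ cl B(x i, 1/k) : i}` associated with a tuple. -/
def ballCover {X : Type*} [MetricSpace X] {n : ℕ} (x : Fin n → X) (k : ℕ) : Set (Set X) :=
  {V | ∃ i : Fin n, V = (Metric.closedBall (x i) (1 / (k : ℝ)))ᶜ}

/-- The relative entropy dimension `D̄(x₁, …, x_n | π)` of a tuple. -/
noncomputable def tupleDim {G X Y : Type*} [Group G] [MetricSpace X] [MulAction G X] {n : ℕ}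
    (F : ℕ → Finset G) (x : Fin n → X) (π : X → Y) : ℝ :=
  limUnder atTop fun k : ℕ => DU F (ballCover x k) π

/-- The tuple lies on the diagonal. -/
def IsDiag {X : Type*} {n : ℕ} (x : Fin n → X) : Prop := ∀ i j, x i = x j

/-- The `n`-th relative dimension set `𝒟_n(X, G | π)`. -/
noncomputable def dimSet {G X Z : Type*} [Group G] [MetricSpace X] [MulAction G X]
    (F : ℕ → Finset G) (π : X → Z) (n : ℕ) : Set ℝ :=
  {α : ℝ | 0 ≤ α ∧ ∃ x : Fin n → X, ¬ IsDiag x ∧ tupleDim F x π = α}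

/-- The translated cover `g𝒰`. -/
def smulCover {G X : Type*} [SMul G X] (g : G) (𝒰 : Set (Set X)) : Set (Set X) :=
  (fun U => (fun x => g • x) '' U) '' 𝒰

/-- The join `𝒰 ∨ 𝒱` of two covers. -/
def covJoin {X : Type*} (𝒰 𝒱 : Set (Set X)) : Set (Set X) :=
  {W | ∃ U ∈ 𝒰, ∃ V ∈ 𝒱, W = U ∩ V}

/-- A standard cover: two non-dense open sets covering `X`. -/
def IsStandardCover {X : Type*} [TopologicalSpace X] (𝒲 : Set (Set X)) : Prop :=
  ∃ U V : Set X, 𝒲 = {U, V} ∧ IsOpen U ∧ IsOpen V ∧ U ∪ V = Set.univ ∧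
    ¬ Dense U ∧ ¬ Dense V


/-! If `S` is a relative entropy generating set, then for some `c > 0` and all large
`n` we have `c |S ∩ Fₙ| ≤ log N(⋁_{g ∈ Fₙ ∩ S} g⁻¹𝒰 | π) ≤ log N(⋁_{g ∈ Fₙ} g⁻¹𝒰 | π)`, the last step
because the join over a larger index set refines the join over a smaller one. Dividing by
`|Fₙ|^α`, every exponent `α` at which the relative lower entropy of `𝒰` vanishes is an exponent
at which the lower density of `S` vanishes, so `D̲(S) ≤ D̲(G, 𝒰 | π)`. -/

lemma log_natCast_le_log_natCast {m n : ℕ} (h : m ≤ n) : Real.log m ≤ Real.log n := by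
  rcases m.eq_zero_or_pos with rfl | hm
  · simpa using Real.log_natCast_nonneg n
  · exact Real.log_le_log (by exact_mod_cast hm) (by exact_mod_cast h)

section Covers

variable {X Y : Type*}

lemma coverNum_le_ncard {𝒱 : Set (Set X)} {E : Set X} (h𝒱 : 𝒱.Finite) (hE : E ⊆ ⋃₀ 𝒱) :
    coverNum 𝒱 E ≤ 𝒱.ncard :=
  Nat.sInf_le ⟨h𝒱.toFinset, by simp, (Set.ncard_eq_toFinset_card _ h𝒱).symm, by simpa⟩

lemma coverNum_le_of_refines {𝒱 𝒲 : Set (Set X)} {E : Set X}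
    (hrefines : ∀ V ∈ 𝒱, ∃ W ∈ 𝒲, V ⊆ W)
    (hE : ∃ t : Finset (Set X), ↑t ⊆ 𝒱 ∧ E ⊆ ⋃₀ (t : Set (Set X))) :
    coverNum 𝒲 E ≤ coverNum 𝒱 E := by
  classical
  obtain ⟨t, ht𝒱, htE⟩ := hE
  obtain ⟨s, hs𝒱, hscard, hsE⟩ := Nat.sInf_mem (s := {k | ∃ t : Finset (Set X),
    ↑t ⊆ 𝒱 ∧ t.card = k ∧ E ⊆ ⋃₀ (t : Set (Set X))}) ⟨_, t, ht𝒱, rfl, htE⟩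
  have hr : ∀ V, ∃ W, V ∈ 𝒱 → W ∈ 𝒲 ∧ V ⊆ W := fun V =>
    (em (V ∈ 𝒱)).elim (fun hV => (hrefines V hV).imp fun _ hW _ => hW)
      (fun hV => ⟨V, fun h => absurd h hV⟩)
  choose r hr using hr
  calc coverNum 𝒲 E ≤ (s.image r).card := Nat.sInf_le ⟨s.image r, ?_, rfl, ?_⟩
    _ ≤ s.card := Finset.card_image_le
    _ = coverNum 𝒱 E := hscard
  · simp only [Finset.coe_image, Set.image_subset_iff]
    exact fun V hV => (hr V (hs𝒱 hV)).1
  · intro x hx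
    obtain ⟨V, hV, hxV⟩ := hsE hx
    exact ⟨r V, Finset.mem_image_of_mem r hV, (hr V (hs𝒱 hV)).2 hxV⟩

lemma NRel_le_ncard {𝒱 : Set (Set X)} (h𝒱 : 𝒱.Finite) (hcov : ⋃₀ 𝒱 = Set.univ) (π : X → Y) :
    NRel 𝒱 π ≤ 𝒱.ncard :=
  ciSup_le' fun _ => coverNum_le_ncard h𝒱 (hcov ▸ Set.subset_univ _)

lemma NRel_le_of_refines {𝒱 𝒲 : Set (Set X)} (h𝒱 : 𝒱.Finite) (hcov : ⋃₀ 𝒱 = Set.univ)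
    (hrefines : ∀ V ∈ 𝒱, ∃ W ∈ 𝒲, V ⊆ W) (π : X → Y) :
    NRel 𝒲 π ≤ NRel 𝒱 π := by
  have hbdd : BddAbove (Set.range fun y => coverNum 𝒱 (π ⁻¹' {y})) :=
    ⟨𝒱.ncard, by
      rintro _ ⟨y, rfl⟩
      exact coverNum_le_ncard h𝒱 (hcov ▸ Set.subset_univ _)⟩
  refine ciSup_le' fun y => (coverNum_le_of_refines hrefines ?_).trans (le_ciSup hbdd y)
  exact ⟨h𝒱.toFinset, by simp, by simp [hcov]⟩

end Covers

section DynJoin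

variable {G X Y : Type*} [Group G] [MulAction G X]

lemma dynJoin_subset_range (B : Finset G) (𝒰 : Set (Set X)) :
    dynJoin B 𝒰 ⊆
      Set.range fun f : B → 𝒰 => ⋂ g : B, (fun x => (g : G) • x) ⁻¹' (f g : Set X) := by
  rintro W ⟨f, hf, rfl⟩
  refine ⟨fun g => ⟨f g, hf g g.2⟩, ?_⟩
  ext x
  simp only [Set.mem_iInter, Set.mem_preimage]
  exact ⟨fun h g hg => h ⟨g, hg⟩, fun h g => h g g.2⟩

lemma dynJoin_finite (B : Finset G) {𝒰 : Set (Set X)} (h𝒰 : 𝒰.Finite) :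
    (dynJoin B 𝒰).Finite :=
  have : Finite 𝒰 := h𝒰
  (Set.finite_range _).subset (dynJoin_subset_range B 𝒰)

lemma ncard_dynJoin_le (B : Finset G) {𝒰 : Set (Set X)} (h𝒰 : 𝒰.Finite) :
    (dynJoin B 𝒰).ncard ≤ 𝒰.ncard ^ B.card := by
  have : Finite 𝒰 := h𝒰
  calc (dynJoin B 𝒰).ncard
      ≤ (Set.range fun f : B → 𝒰 => ⋂ g : B, (fun x => (g : G) • x) ⁻¹' (f g : Set X)).ncard :=
        Set.ncard_le_ncard (dynJoin_subset_range B 𝒰) (Set.finite_range _)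
    _ ≤ Nat.card (B → 𝒰) := Finite.card_range_le _
    _ = 𝒰.ncard ^ B.card := by simp [Nat.card_fun]

lemma sUnion_dynJoin (B : Finset G) {𝒰 : Set (Set X)} (hcov : ⋃₀ 𝒰 = Set.univ) :
    ⋃₀ dynJoin B 𝒰 = Set.univ := by
  refine Set.eq_univ_of_forall fun x => ?_
  have hmem : ∀ g : G, ∃ U ∈ 𝒰, g • x ∈ U := fun g =>
    Set.mem_sUnion.mp (hcov ▸ Set.mem_univ (g • x))
  choose f hf𝒰 hxf using hmem
  exact ⟨_, ⟨f, fun g _ => hf𝒰 g, rfl⟩, Set.mem_iInter₂.mpr fun g _ => hxf g⟩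

lemma dynJoin_refines {B₁ B₂ : Finset G} (hB : B₁ ⊆ B₂) (𝒰 : Set (Set X)) :
    ∀ V ∈ dynJoin B₂ 𝒰, ∃ W ∈ dynJoin B₁ 𝒰, V ⊆ W := by
  rintro _ ⟨f, hf, rfl⟩
  exact ⟨_, ⟨f, fun g hg => hf g (hB hg), rfl⟩,
    fun _ hx => Set.mem_iInter₂.mpr fun g hg => Set.mem_iInter₂.mp hx g (hB hg)⟩

variable {𝒰 : Set (Set X)}

lemma NRel_dynJoin_le_pow (h𝒰 : 𝒰.Finite) (hcov : ⋃₀ 𝒰 = Set.univ) (B : Finset G)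
    (π : X → Y) : NRel (dynJoin B 𝒰) π ≤ 𝒰.ncard ^ B.card :=
  (NRel_le_ncard (dynJoin_finite B h𝒰) (sUnion_dynJoin B hcov) π).trans (ncard_dynJoin_le B h𝒰)

lemma NRel_dynJoin_mono (h𝒰 : 𝒰.Finite) (hcov : ⋃₀ 𝒰 = Set.univ) {B₁ B₂ : Finset G}
    (hB : B₁ ⊆ B₂) (π : X → Y) : NRel (dynJoin B₁ 𝒰) π ≤ NRel (dynJoin B₂ 𝒰) π :=
  NRel_le_of_refines (dynJoin_finite B₂ h𝒰) (sUnion_dynJoin B₂ hcov) (dynJoin_refines hB 𝒰) π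

lemma log_NRel_dynJoin_le (h𝒰 : 𝒰.Finite) (hcov : ⋃₀ 𝒰 = Set.univ) (B : Finset G)
    (π : X → Y) : Real.log (NRel (dynJoin B 𝒰) π) ≤ B.card * Real.log 𝒰.ncard := by
  rw [← Real.log_pow, ← Nat.cast_pow]
  exact log_natCast_le_log_natCast (NRel_dynJoin_le_pow h𝒰 hcov B π)

end DynJoin

lemma ENNReal.liminf_eq_zero_of_const_mul_le {ι : Type*} {l : Filter ι} {a b : ι → ℝ≥0∞}
    {c : ℝ≥0∞} (hc₀ : c ≠ 0) (hc : c ≠ ⊤) (hab : ∀ᶠ i in l, c * a i ≤ b i)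
    (hb : l.liminf b = 0) : l.liminf a = 0 := by
  have hca : c * l.liminf a ≤ 0 := by
    rw [← ENNReal.liminf_const_mul_of_ne_zero_of_ne_top hc₀ hc, ← hb]
    exact liminf_le_liminf hab
  simpa [hc₀] using hca

lemma interF_subset {G : Type*} (A : Finset G) (S : Set G) : interF A S ⊆ A :=
  @Finset.filter_subset G (· ∈ S) (Classical.decPred _) A

lemma InI.tendsto_card {G : Type*} {F : ℕ → Finset G} {S : Set G} (hS : InI F S) :
    Tendsto (fun n => (F n).card) atTop atTop :=
  tendsto_atTop_mono (fun n => Finset.card_le_card (interF_subset (F n) S)) hS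

section EntropyDimension

variable {G X Y : Type*} [Group G] [MulAction G X] {F : ℕ → Finset G} {S : Set G}
  {𝒰 : Set (Set X)} {π : X → Y}

lemma IsEntGen.exists_const_mul_card_le (hS : IsEntGen F S 𝒰 π) (h𝒰 : 𝒰.Finite)
    (hcov : ⋃₀ 𝒰 = Set.univ) :
    ∃ c : ℝ≥0∞, c ≠ 0 ∧ c ≠ ⊤ ∧ ∀ᶠ n in atTop,
      c * (interF (F n) S).card ≤ ENNReal.ofReal (Real.log (NRel (dynJoin (F n) 𝒰) π)) := by
  obtain ⟨c, hc₀, hc⟩ := exists_between hS.2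
  refine ⟨c, hc₀.ne', hc.ne_top, ?_⟩
  filter_upwards [eventually_lt_of_lt_liminf hc, hS.1.eventually_ge_atTop 1] with n hcn hn
  have hk₀ : ((interF (F n) S).card : ℝ≥0∞) ≠ 0 := by simp only [ne_eq, Nat.cast_eq_zero]; omega
  calc c * (interF (F n) S).card
      ≤ ENNReal.ofReal (Real.log (NRel (dynJoin (interF (F n) S) 𝒰) π)) :=
        (ENNReal.le_div_iff_mul_le (.inl hk₀) (.inl (ENNReal.natCast_ne_top _))).mp hcn.le
    _ ≤ ENNReal.ofReal (Real.log (NRel (dynJoin (F n) 𝒰) π)) :=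
        ENNReal.ofReal_le_ofReal <| log_natCast_le_log_natCast <|
          NRel_dynJoin_mono h𝒰 hcov (interF_subset (F n) S) π

lemma IsEntGen.DlowAt_eq_zero (hS : IsEntGen F S 𝒰 π) (h𝒰 : 𝒰.Finite)
    (hcov : ⋃₀ 𝒰 = Set.univ) {α : ℝ} (hα : hRelL F 𝒰 π α = 0) : DlowAt F S α = 0 := by
  obtain ⟨c, hc₀, hc, hle⟩ := hS.exists_const_mul_card_le h𝒰 hcov
  refine ENNReal.liminf_eq_zero_of_const_mul_le hc₀ hc ?_ hα
  filter_upwards [hle] with n hn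
  rw [← mul_div_assoc]
  exact ENNReal.div_le_div_right hn _

lemma hRelL_eq_zero_of_one_lt (hF : Tendsto (fun n => (F n).card) atTop atTop)
    (h𝒰 : 𝒰.Finite) (hcov : ⋃₀ 𝒰 = Set.univ) (π : X → Y) {α : ℝ} (hα : 1 < α) :
    hRelL F 𝒰 π α = 0 := by
  set L := Real.log 𝒰.ncard
  have hle : ∀ᶠ n in atTop,
      ENNReal.ofReal (Real.log (NRel (dynJoin (F n) 𝒰) π)) /
        ENNReal.ofReal (((F n).card : ℝ) ^ α) ≤
      ENNReal.ofReal (L * ((F n).card : ℝ) ^ (1 - α)) := by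
    filter_upwards [hF.eventually_ge_atTop 1] with n hn
    have hx : (0 : ℝ) < (F n).card := by exact_mod_cast hn
    rw [← ENNReal.ofReal_div_of_pos (by positivity), Real.rpow_sub hx, Real.rpow_one,
      ← mul_div_assoc, mul_comm L]
    exact ENNReal.ofReal_le_ofReal <| div_le_div_of_nonneg_right
      (log_NRel_dynJoin_le h𝒰 hcov (F n) π) (by positivity)
  have hlim :
      Tendsto (fun n => ENNReal.ofReal (L * ((F n).card : ℝ) ^ (1 - α))) atTop (𝓝 0) := by
    have hpow : Tendsto (fun x : ℝ => x ^ (1 - α)) atTop (𝓝 0) := by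
      simpa using tendsto_rpow_neg_atTop (sub_pos.mpr hα)
    simpa using ENNReal.tendsto_ofReal
      ((hpow.comp (tendsto_natCast_atTop_atTop.comp hF)).const_mul L)
  exact nonpos_iff_eq_zero.mp <| (liminf_le_liminf hle).trans_eq hlim.liminf_eq

lemma IsEntGen.lowerDim_le_DL (hS : IsEntGen F S 𝒰 π) (h𝒰 : 𝒰.Finite)
    (hcov : ⋃₀ 𝒰 = Set.univ) : lowerDim F S ≤ DL F 𝒰 π :=
  -- the exponent `2` shows the set defining `DL` is nonempty; otherwise `DL` would be `sInf ∅ = 0`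
  le_csInf ⟨2, zero_le_two, hRelL_eq_zero_of_one_lt hS.1.tendsto_card h𝒰 hcov π one_lt_two⟩
    fun _ hα => csInf_le ⟨0, fun _ h => h.1⟩ ⟨hα.1, hS.DlowAt_eq_zero h𝒰 hcov hα.2⟩

end EntropyDimension

theorem stmt11_general {G X Y : Type*} [Group G] [MetricSpace X] [MulAction G X]
    (π : X → Y) (F : ℕ → Finset G) (𝒰 : Set (Set X)) (h𝒰 : IsOpenCover 𝒰) :
    DeL F 𝒰 π ≤ DL F 𝒰 π := by
  refine Real.sSup_le ?_ (Real.sInf_nonneg fun _ h => h.1)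
  rintro _ ⟨S, hS, rfl⟩
  exact hS.lowerDim_le_DL h𝒰.1 h𝒰.2.2

theorem stmt11 {G X Y : Type*} [Group G] [Countable G]
    [MetricSpace X] [CompactSpace X] [MetricSpace Y] [CompactSpace Y]
    [MulAction G X] [MulAction G Y]
    (hcX : ∀ g : G, Continuous fun x : X => g • x)
    (hcY : ∀ g : G, Continuous fun y : Y => g • y)
    (π : X → Y) (hπ : IsFactorMap G π)
    (F : ℕ → Finset G) (hF : IsFolnerSeq G F) (hFmono : ∀ n, F n ⊆ F (n + 1))
    (𝒰 : Set (Set X)) (h𝒰 : IsOpenCover 𝒰) :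
    DeL F 𝒰 π ≤ DL F 𝒰 π :=
  stmt11_general π F 𝒰 h𝒰
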